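/- arXiv:2102.07839 — 6 statements merged into one kernel-verified Lean document; each statement's English description precedes it below -/
import Mathlib

section
/- Every allocation in the support of an interim envy-free lottery is proportional: if Q is iEF and A is in the support of Q with agent i receiving bundle S = A_i, then v_i(S) ≥ (1/n) · v_i(I). -/
open Finset

/-- Value of agent `i` for a bundle `S` of items (additive valuations). -/
def bundleVal {n m : ℕ} (v : Fin n → Fin m → ℝ) (i : Fin n) (S : Finset (Fin m)) : ℝ :=
  ∑ j ∈ S, v i j

/-- Probability that agent `i` receives bundle `S` under lottery `x`. -/
def prBundle {n m : ℕ} (x : (Fin n → Finset (Fin m)) → ℝ) (i : Fin n) (S : Finset (Fin m)) : ℝ :=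
  ∑ a ∈ Finset.univ.filter (fun a => a i = S), x a

/-- Interim envy-freeness: for all `i ≠ k` and every bundle `S` received with positive
probability, `v_i(S) ≥ E[v_i(A_k) | A_i = S]` (stated multiplied through by the
positive probability `Pr[A_i = S]`). -/
def IEF {n m : ℕ} (v : Fin n → Fin m → ℝ) (x : (Fin n → Finset (Fin m)) → ℝ) : Prop :=
  ∀ i k : Fin n, i ≠ k → ∀ S : Finset (Fin m), 0 < prBundle x i S →
    (∑ a ∈ Finset.univ.filter (fun a => a i = S), x a * bundleVal v i (a k))
      ≤ bundleVal v i S * prBundle x i S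

/-- An allocation is a partition of the items into bundles, one per agent. -/
def IsPartition {n m : ℕ} (a : Fin n → Finset (Fin m)) : Prop :=
  (∀ i k : Fin n, i ≠ k → Disjoint (a i) (a k)) ∧ ∀ j : Fin m, ∃ i, j ∈ a i

/- Fix agent `i` and a bundle `S` it receives with positive probability. Conditioned on
`A_i = S`, every allocation in the support is a partition, so the conditional expectations
`E[v_i(A_k) | A_i = S]` add up over all agents `k` to `v_i(I)`. Interim envy-freeness bounds each of
these `n` terms by `v_i(S)` (for `k = i` it is equal to it), hence `v_i(I) ≤ n · v_i(S)`. -/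

theorem IsPartition.sum_sum {n m : ℕ} {M : Type*} [AddCommMonoid M]
    {a : Fin n → Finset (Fin m)} (h : IsPartition a) (f : Fin m → M) :
    ∑ k, ∑ j ∈ a k, f j = ∑ j, f j := by
  rw [← Finset.sum_biUnion fun p _ q _ hpq => h.1 p q hpq]
  refine Finset.sum_congr (Finset.eq_univ_of_forall fun j => ?_) fun _ _ => rfl
  simpa only [Finset.mem_biUnion, Finset.mem_univ, true_and] using h.2 j

theorem IsPartition.sum_bundleVal {n m : ℕ} {a : Fin n → Finset (Fin m)} (h : IsPartition a)
    (v : Fin n → Fin m → ℝ) (i : Fin n) :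
    ∑ k, bundleVal v i (a k) = bundleVal v i Finset.univ :=
  h.sum_sum (v i)

section Lottery

variable {n m : ℕ} {v : Fin n → Fin m → ℝ} {x : (Fin n → Finset (Fin m)) → ℝ}

theorem prBundle_pos (hx0 : ∀ a, 0 ≤ x a) {a : Fin n → Finset (Fin m)} (ha : 0 < x a)
    (i : Fin n) : 0 < prBundle x i (a i) :=
  Finset.sum_pos' (fun b _ => hx0 b) ⟨a, Finset.mem_filter.2 ⟨Finset.mem_univ a, rfl⟩, ha⟩

theorem sum_filter_mul_bundleVal_self (i : Fin n) (S : Finset (Fin m)) :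
    ∑ a ∈ Finset.univ.filter (fun a => a i = S), x a * bundleVal v i (a i)
      = bundleVal v i S * prBundle x i S := by
  rw [prBundle, Finset.mul_sum]
  refine Finset.sum_congr rfl fun a ha => ?_
  rw [(Finset.mem_filter.1 ha).2, mul_comm]

theorem IEF.sum_filter_mul_bundleVal_le (hief : IEF v x) (i k : Fin n) {S : Finset (Fin m)}
    (hS : 0 < prBundle x i S) :
    ∑ a ∈ Finset.univ.filter (fun a => a i = S), x a * bundleVal v i (a k)
      ≤ bundleVal v i S * prBundle x i S := by
  obtain rfl | hik := eq_or_ne i k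
  · exact (sum_filter_mul_bundleVal_self i S).le
  · exact hief i k hik S hS

theorem sum_sum_filter_mul_bundleVal (hx0 : ∀ a, 0 ≤ x a) (hsupp : ∀ a, 0 < x a → IsPartition a)
    (i : Fin n) (S : Finset (Fin m)) :
    ∑ k, ∑ a ∈ Finset.univ.filter (fun a => a i = S), x a * bundleVal v i (a k)
      = bundleVal v i Finset.univ * prBundle x i S := by
  rw [Finset.sum_comm, prBundle, Finset.mul_sum]
  refine Finset.sum_congr rfl fun a _ => ?_
  obtain h0 | hpos := (hx0 a).eq_or_lt
  · simp only [← h0, zero_mul, mul_zero, Finset.sum_const_zero]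
  · rw [← Finset.mul_sum, (hsupp a hpos).sum_bundleVal, mul_comm]

theorem IEF.bundleVal_univ_le (hief : IEF v x) (hx0 : ∀ a, 0 ≤ x a)
    (hsupp : ∀ a, 0 < x a → IsPartition a) (i : Fin n) {S : Finset (Fin m)}
    (hS : 0 < prBundle x i S) :
    bundleVal v i Finset.univ ≤ n * bundleVal v i S := by
  have hsum : bundleVal v i Finset.univ * prBundle x i S
      ≤ n * bundleVal v i S * prBundle x i S :=
    calc bundleVal v i Finset.univ * prBundle x i S
        = ∑ k, ∑ a ∈ Finset.univ.filter (fun a => a i = S), x a * bundleVal v i (a k) :=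
          (sum_sum_filter_mul_bundleVal hx0 hsupp i S).symm
      _ ≤ ∑ _k : Fin n, bundleVal v i S * prBundle x i S :=
          Finset.sum_le_sum fun k _ => hief.sum_filter_mul_bundleVal_le i k hS
      _ = n * bundleVal v i S * prBundle x i S := by
          rw [Finset.sum_const, Finset.card_univ, Fintype.card_fin, nsmul_eq_mul, mul_assoc]
  exact le_of_mul_le_mul_right hsum hS

end Lottery

theorem iEF_support_proportional_general {n m : ℕ} (v : Fin n → Fin m → ℝ)
    (x : (Fin n → Finset (Fin m)) → ℝ)
    (hx0 : ∀ a, 0 ≤ x a)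
    (hsupp : ∀ a, 0 < x a → IsPartition a)
    (hief : IEF v x) :
    ∀ a, 0 < x a → ∀ i : Fin n,
      (1 / (n : ℝ)) * bundleVal v i Finset.univ ≤ bundleVal v i (a i) := by
  intro a ha i
  have hn : (0 : ℝ) < n := by exact_mod_cast i.pos
  rw [one_div, inv_mul_le_iff₀ hn]
  exact hief.bundleVal_univ_le hx0 hsupp i (prBundle_pos hx0 ha i)

/-- every allocation in the support of an iEF lottery is proportional. -/
theorem iEF_support_proportional {n m : ℕ} (hn : 0 < n) (v : Fin n → Fin m → ℝ)
    (hv : ∀ i j, 0 ≤ v i j)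
    (x : (Fin n → Finset (Fin m)) → ℝ)
    (hx0 : ∀ a, 0 ≤ x a) (hx1 : ∑ a, x a = 1)
    (hsupp : ∀ a, 0 < x a → IsPartition a)
    (hief : IEF v x) :
    ∀ a, 0 < x a → ∀ i : Fin n,
      (1 / (n : ℝ)) * bundleVal v i Finset.univ ≤ bundleVal v i (a i) :=
  iEF_support_proportional_general v x hx0 hsupp hief
end

section
/- For every n ≥ 2, the n-agent matching instance where agent 1 values item g_1 at 1/n, item g_2 at (n−1)/n and all others at 0, and each agent i ≥ 2 values items g_2,...,g_n at 1/(n−1) each and g_1 at 0, admits an iEF lottery: the lottery that always gives g_1 to agent 1 and assigns items g_2,...,g_n to agents 2,...,n uniformly at random is interim envy-free, and in every matching in its support agent 1's envy toward the holder of g_2 equals 1 − 2/n. -/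
open Finset

/-- Probability that agent `i` receives item `j` under a lottery `x` over matchings. -/
def prMatch {n : ℕ} (x : Equiv.Perm (Fin n) → ℝ) (i j : Fin n) : ℝ :=
  ∑ b ∈ Finset.univ.filter (fun b : Equiv.Perm (Fin n) => b i = j), x b

/-- Interim envy-freeness of a lottery over matchings: for all agents `i ≠ k` and every
item `j` received by `i` with positive probability, `v_i(j) ≥ E[v_i(b(k)) | b(i) = j]`
(stated multiplied through by the positive probability `Pr[b(i) = j]`). -/
def MIEF {n : ℕ} (v : Fin n → Fin n → ℝ) (x : Equiv.Perm (Fin n) → ℝ) : Prop :=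
  ∀ i k : Fin n, i ≠ k → ∀ j : Fin n, 0 < prMatch x i j →
    (∑ b ∈ Finset.univ.filter (fun b : Equiv.Perm (Fin n) => b i = j), x b * v i (b k))
      ≤ v i j * prMatch x i j
/-- Valuations of the instance with `n+2` agents and items: agent 1 (index 0) values
item g₁ (index 0) at 1/n, item g₂ (index 1) at (n-1)/n; every other agent values g₁ at 0
and every other item at 1/(n-1).  Here the number of agents is `n+2`. -/
noncomputable def v6 (n : ℕ) : Fin (n+2) → Fin (n+2) → ℝ := fun i j =>
  if (i : ℕ) = 0 then
    (if (j : ℕ) = 0 then 1 / ((n : ℝ) + 2)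
     else if (j : ℕ) = 1 then ((n : ℝ) + 1) / ((n : ℝ) + 2)
     else 0)
  else
    (if (j : ℕ) = 0 then 0 else 1 / ((n : ℝ) + 1))

/-- The lottery giving item g₁ to agent 1 and assigning the remaining items uniformly at
random to the remaining agents: probability 1/(n-1)! on each matching fixing 0. -/
noncomputable def lot6 (n : ℕ) : Equiv.Perm (Fin (n+2)) → ℝ := fun b =>
  if b 0 = 0 then 1 / ((Nat.factorial (n+1) : ℝ)) else 0

/-!
Every agent other than agent 1 is always handed an item of the largest value 1/(n-1) to them,
so envies nobody. Agent 1 always gets g₁, worth 1/n; conditioned on this, any other agent holds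
g₂ with probability 1/(n-1), so agent 1 expects that agent's bundle to be worth exactly
(1/(n-1)) · (n-1)/n = 1/n: the interim envy-freeness constraint holds with equality.
-/

open Equiv Equiv.Perm Nat

theorem Equiv.Perm.decomposeFin_symm_zero_apply_succ {m : ℕ} (e : Perm (Fin m)) (k : Fin m) :
    decomposeFin.symm (0, e) k.succ = (e k).succ := by
  simp [decomposeFin_symm_apply_succ]

theorem sum_filter_perm_apply_zero_eq_zero {M : Type*} [AddCommMonoid M] {m : ℕ}
    (f : Perm (Fin (m + 1)) → M) :
    ∑ b with b 0 = 0, f b = ∑ e : Perm (Fin m), f (decomposeFin.symm (0, e)) := by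
  rw [sum_filter, ← decomposeFin.symm.sum_comp, Fintype.sum_prod_type, sum_comm]
  simp [decomposeFin_symm_apply_zero]

theorem card_filter_perm_apply_eq {m : ℕ} (a c : Fin (m + 1)) :
    #{e : Perm (Fin (m + 1)) | e a = c} = m ! := by
  have h : #{e : Perm (Fin (m + 1)) | e a = c} = #{e : Perm (Fin (m + 1)) | e 0 = 0} := by
    refine card_nbij' (fun e => swap 0 c * e * swap 0 a) (fun e => swap 0 c * e * swap 0 a)
      ?_ ?_ ?_ ?_ <;> intro e he <;>
      simp only [coe_filter, Set.mem_ofPred_eq, mem_univ, true_and] at he ⊢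
    · simp [he]
    · simp [he]
    all_goals simp only [mul_assoc, swap_mul_self_mul, swap_mul_self, mul_one]
  rw [h, card_eq_sum_ones, sum_filter_perm_apply_zero_eq_zero, sum_const, Finset.card_univ,
    Fintype.card_perm, Fintype.card_fin, smul_eq_mul, mul_one]

theorem sum_filter_mul_le_mul_prMatch {n : ℕ} {v : Fin n → Fin n → ℝ}
    {x : Perm (Fin n) → ℝ} (hx : ∀ b, 0 ≤ x b) {i k j : Fin n}
    (h : ∀ b : Perm (Fin n), b i = j → v i (b k) ≤ v i j) :
    ∑ b with b i = j, x b * v i (b k) ≤ v i j * prMatch x i j := by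
  rw [prMatch, mul_sum]
  refine sum_le_sum fun b hb => ?_
  rw [mul_comm (v i j)]
  exact mul_le_mul_of_nonneg_left (h b (mem_filter.1 hb).2) (hx b)

theorem v6_zero_succ (n : ℕ) (x : Fin (n + 1)) :
    v6 n 0 x.succ = if x = 0 then ((n : ℝ) + 1) / ((n : ℝ) + 2) else 0 := by
  simp only [v6, Fin.val_zero, Fin.val_succ, Nat.add_eq_zero_iff, one_ne_zero, and_false,
    Nat.add_eq_right, Fin.val_eq_zero_iff, if_true, if_false]

theorem v6_le_of_ne_zero {n : ℕ} {i j : Fin (n + 2)} (hi : i ≠ 0) (hj : j ≠ 0)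
    (l : Fin (n + 2)) :
    v6 n i l ≤ v6 n i j := by
  simp only [v6, Fin.val_eq_zero_iff, hi, hj, if_false]
  split_ifs
  exacts [by positivity, le_rfl]

theorem v6_zero_one_sub_v6_zero_zero (n : ℕ) :
    v6 n 0 1 - v6 n 0 0 = 1 - 2 / ((n : ℝ) + 2) := by
  simp only [v6, Fin.val_zero, Fin.val_one, if_true, one_ne_zero, if_false]
  field_simp
  ring

theorem lot6_nonneg (n : ℕ) (b : Perm (Fin (n + 2))) : 0 ≤ lot6 n b := by
  unfold lot6
  split_ifs <;> positivity

theorem apply_zero_eq_zero_of_lot6_ne_zero {n : ℕ} {b : Perm (Fin (n + 2))}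
    (hb : lot6 n b ≠ 0) : b 0 = 0 := by
  by_contra h
  exact hb (if_neg h)

theorem sum_filter_lot6_mul (n : ℕ) (f : Perm (Fin (n + 2)) → ℝ) :
    ∑ b with b 0 = 0, lot6 n b * f b
      = (∑ e : Perm (Fin (n + 1)), f (decomposeFin.symm (0, e))) / (n + 1)! := by
  rw [sum_filter_perm_apply_zero_eq_zero, sum_div]
  simp [lot6, decomposeFin_symm_apply_zero, div_eq_inv_mul]

theorem prMatch_lot6_zero_zero (n : ℕ) : prMatch (lot6 n) 0 0 = 1 := by
  have h := sum_filter_lot6_mul n 1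
  simp only [Pi.one_apply, mul_one, sum_const, Finset.card_univ, Fintype.card_perm,
    Fintype.card_fin, nsmul_eq_mul] at h
  rw [prMatch, h, div_self (by positivity)]

theorem sum_lot6_eq_one (n : ℕ) : ∑ b, lot6 n b = 1 := by
  rw [← sum_filter_of_ne fun b _ => apply_zero_eq_zero_of_lot6_ne_zero]
  exact prMatch_lot6_zero_zero n

theorem prMatch_lot6_eq_zero {n : ℕ} {i j : Fin (n + 2)} (h : ¬(i = 0 ↔ j = 0)) :
    prMatch (lot6 n) i j = 0 := by
  refine sum_eq_zero fun b hb => ?_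
  by_contra hb0
  have h0 := apply_zero_eq_zero_of_lot6_ne_zero hb0
  have hij := (mem_filter.1 hb).2
  exact h ⟨fun hi => by rwa [← hij, hi], fun hj => b.injective (by rw [hij, hj, h0])⟩

theorem sum_filter_lot6_mul_v6_zero {n : ℕ} {k : Fin (n + 2)} (hk : k ≠ 0) :
    ∑ b with b 0 = 0, lot6 n b * v6 n 0 (b k) = v6 n 0 0 := by
  obtain ⟨k, rfl⟩ := Fin.exists_succ_eq.2 hk
  simp only [sum_filter_lot6_mul, decomposeFin_symm_zero_apply_succ, v6_zero_succ]
  rw [← sum_filter, sum_const, card_filter_perm_apply_eq, nsmul_eq_mul, factorial_succ]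
  simp only [v6, Fin.val_zero, if_true]
  push_cast
  field_simp

theorem mIEF_v6_lot6 (n : ℕ) : MIEF (v6 n) (lot6 n) := by
  intro i k hik j hj
  by_cases hi : i = 0
  · subst hi
    obtain rfl : j = 0 := by
      by_contra hj0
      exact hj.ne' (prMatch_lot6_eq_zero (by simp [hj0]))
    rw [sum_filter_lot6_mul_v6_zero (Ne.symm hik), prMatch_lot6_zero_zero, mul_one]
  · have hj0 : j ≠ 0 := by
      rintro rfl
      exact hj.ne' (prMatch_lot6_eq_zero (by simp [hi]))
    exact sum_filter_mul_le_mul_prMatch (lot6_nonneg n) fun b _ => v6_le_of_ne_zero hi hj0 _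

/-- the uniform lottery is a genuine lottery, it is interim envy-free,
and in every matching in its support agent 1's envy toward the holder of g₂ equals
1 - 2/n (with n+2 agents: 1 - 2/(n+2)). -/
theorem max_envy_instance (n : ℕ) :
    (∀ b, 0 ≤ lot6 n b) ∧ (∑ b, lot6 n b = 1) ∧ MIEF (v6 n) (lot6 n) ∧
    (∀ b : Equiv.Perm (Fin (n+2)), 0 < lot6 n b → ∀ k, b k = 1 →
      v6 n 0 (b k) - v6 n 0 (b 0) = 1 - 2 / ((n : ℝ) + 2)) := by
  refine ⟨lot6_nonneg n, sum_lot6_eq_one n, mIEF_v6_lot6 n, fun b hb k hk => ?_⟩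
  rw [hk, apply_zero_eq_zero_of_lot6_ne_zero hb.ne']
  exact v6_zero_one_sub_v6_zero_zero n
end

section
/- If a lottery Q is iEF-able with A-payments (there exists a payment vector p with v_i(S) + p_i ≥ E[v_i(A_k) | A_i = S] + p_k for all i ≠ k and all bundles S given to i with positive probability), then for every selection of bundles S_i given to each agent i with positive probability and every permutation σ of the agents, Σ_i v_i(S_i) ≥ Σ_i E_{A~Q}[v_i(A_{σ(i)}) | A_i = S_i]. -/
open Finset

/-- The conditional expectation `E[v_i(A_k) | A_i = S]`. -/
noncomputable def condVal {n m : ℕ} (v : Fin n → Fin m → ℝ)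
    (x : (Fin n → Finset (Fin m)) → ℝ) (i k : Fin n) (S : Finset (Fin m)) : ℝ :=
  (∑ a ∈ Finset.univ.filter (fun a => a i = S), x a * bundleVal v i (a k)) / prBundle x i S

/-- The pair of a lottery `x` and A-payments `p` is interim envy-free: for all agents
`i ≠ k` and every bundle `S` received by `i` with positive probability,
`v_i(S) + p_i ≥ E[v_i(A_k) | A_i = S] + p_k`. -/
def IEFpay {n m : ℕ} (v : Fin n → Fin m → ℝ)
    (x : (Fin n → Finset (Fin m)) → ℝ) (p : Fin n → ℝ) : Prop :=
  ∀ i k : Fin n, i ≠ k → ∀ S : Finset (Fin m), 0 < prBundle x i S →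
    condVal v x i k S + p k ≤ bundleVal v i S + p i

/-- if a lottery is iEF-able with A-payments, then for every selection of
positive-probability bundles `S i` and every permutation σ of the agents,
`Σ_i v_i(S_i) ≥ Σ_i E[v_i(A_{σ(i)}) | A_i = S_i]`. -/
theorem iEFable_implies_sum_condition {n m : ℕ} (v : Fin n → Fin m → ℝ)
    (hv : ∀ i j, 0 ≤ v i j)
    (x : (Fin n → Finset (Fin m)) → ℝ)
    (hx0 : ∀ a, 0 ≤ x a) (hx1 : ∑ a, x a = 1)
    (p : Fin n → ℝ) (hp : IEFpay v x p)
    (S : Fin n → Finset (Fin m)) (hS : ∀ i, 0 < prBundle x i (S i))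
    (σ : Equiv.Perm (Fin n)) :
    ∑ i, condVal v x i (σ i) (S i) ≤ ∑ i, bundleVal v i (S i) := by
  have key : ∀ i, condVal v x i (σ i) (S i) + p (σ i) ≤ bundleVal v i (S i) + p i := by
    intro i
    by_cases h : i = σ i
    · have : condVal v x i (σ i) (S i) = bundleVal v i (S i) := by
        rw [← h]
        unfold condVal
        have hsum : (∑ a ∈ Finset.univ.filter (fun a => a i = S i), x a * bundleVal v i (a i))
            = bundleVal v i (S i) * prBundle x i (S i) := by
          rw [prBundle, Finset.mul_sum]
          apply Finset.sum_congr rfl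
          intro a ha
          rw [Finset.mem_filter] at ha
          rw [ha.2, mul_comm]
        rw [hsum, mul_div_assoc, div_self (ne_of_gt (hS i)), mul_one]
      rw [this, ← h]
    · exact hp i (σ i) h (S i) (hS i)
  have h1 : ∑ i, (condVal v x i (σ i) (S i) + p (σ i)) ≤ ∑ i, (bundleVal v i (S i) + p i) :=
    Finset.sum_le_sum fun i _ => key i
  rw [Finset.sum_add_distrib, Finset.sum_add_distrib,
    Equiv.sum_comp σ p] at h1
  linarith
end

section
/- If the interim envy graph of a lottery Q has no cycle of positive total weight, then Q is iEF-able with A-payments: setting p_i equal to the maximum total weight over all directed paths starting at node i in the interim envy graph yields payments making the pair (Q, p) iEF. -/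
open Finset

/-- The edge weight of the interim envy graph:
`w(i,k) = max over bundles S with Pr[A_i = S] > 0 of (E[v_i(A_k) | A_i = S] - v_i(S))`. -/
noncomputable def envyWeight {n m : ℕ} (v : Fin n → Fin m → ℝ)
    (x : (Fin n → Finset (Fin m)) → ℝ) (i k : Fin n) : ℝ :=
  sSup {y : ℝ | ∃ S : Finset (Fin m), 0 < prBundle x i S ∧
    y = condVal v x i k S - bundleVal v i S}

/-- The total weight of a walk (list of nodes) in a weighted digraph. -/
def pathWeight {n : ℕ} (w : Fin n → Fin n → ℝ) : List (Fin n) → ℝ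
  | [] => 0
  | [_] => 0
  | a :: b :: t => w a b + pathWeight w (b :: t)

/-!
The payments `p i` form a potential for the interim envy graph: a path starting at `k` either
avoids `i`, and then the edge `i → k` extends it to a path from `i`, or it passes through `i`,
and then its segment from `k` to `i` closes a cycle with that edge, whose weight is at most `0`.
Either way `w(i,k) + p k ≤ p i`, and `w(i,k)` bounds the interim envy of `i` towards `k`.
-/

def NoPositiveCycle {n : ℕ} (w : Fin n → Fin n → ℝ) : Prop :=
  ∀ (i : Fin n) (l : List (Fin n)), (i :: l).Nodup → l ≠ [] →
    pathWeight w (i :: l ++ [i]) ≤ 0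

noncomputable def maxPathWeight {n : ℕ} (w : Fin n → Fin n → ℝ) (i : Fin n) : ℝ :=
  sSup {y : ℝ | ∃ l : List (Fin n), (i :: l).Nodup ∧ y = pathWeight w (i :: l)}

section PathWeight

variable {n : ℕ} (w : Fin n → Fin n → ℝ)

theorem pathWeight_append_cons :
    ∀ (l₁ : List (Fin n)) (a : Fin n) (l₂ : List (Fin n)),
      pathWeight w (l₁ ++ a :: l₂) = pathWeight w (l₁ ++ [a]) + pathWeight w (a :: l₂)
  | [], _, _ => by simp [pathWeight]
  | [_], _, _ => by simp [pathWeight]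
  | b :: c :: t, a, l₂ => by
    have ih := pathWeight_append_cons (c :: t) a l₂
    simp only [List.cons_append, pathWeight] at ih ⊢
    linarith

theorem bddAbove_pathWeight_nodup (i : Fin n) :
    BddAbove {y : ℝ | ∃ l : List (Fin n), (i :: l).Nodup ∧ y = pathWeight w (i :: l)} := by
  have hfin : {l : List (Fin n) | (i :: l).Nodup}.Finite :=
    (List.finite_length_le (Fin n) n).subset fun l hl => by
      simpa using (List.nodup_cons.mp hl).2.length_le_card
  refine ((hfin.image fun l => pathWeight w (i :: l)).bddAbove).mono ?_
  rintro _ ⟨l, hl, rfl⟩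
  exact ⟨l, hl, rfl⟩

theorem pathWeight_le_maxPathWeight {i : Fin n} {l : List (Fin n)} (hl : (i :: l).Nodup) :
    pathWeight w (i :: l) ≤ maxPathWeight w i :=
  le_csSup (bddAbove_pathWeight_nodup w i) ⟨l, hl, rfl⟩

variable {w}

theorem add_pathWeight_le_maxPathWeight
    (hcyc : NoPositiveCycle w) {i k : Fin n} (hik : i ≠ k) {l : List (Fin n)}
    (hl : (k :: l).Nodup) :
    w i k + pathWeight w (k :: l) ≤ maxPathWeight w i := by
  by_cases hi : i ∈ l
  · obtain ⟨pre, suf, rfl⟩ := List.append_of_mem hi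
    have hcycle : (i :: k :: pre).Nodup :=
      (List.perm_append_singleton i (k :: pre)).nodup_iff.mp
        (hl.sublist (by simp))
    have hsuf : (i :: suf).Nodup := hl.sublist (by simp)
    have hw := hcyc i (k :: pre) hcycle (List.cons_ne_nil _ _)
    have hsplit := pathWeight_append_cons w (k :: pre) i suf
    simp only [List.cons_append, pathWeight] at hw hsplit ⊢
    linarith [pathWeight_le_maxPathWeight w hsuf]
  · have hpath : (i :: k :: l).Nodup :=
      List.nodup_cons.mpr ⟨by simp [hik, hi], hl⟩
    exact pathWeight_le_maxPathWeight w hpath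

theorem add_maxPathWeight_le_maxPathWeight
    (hcyc : NoPositiveCycle w) {i k : Fin n} (hik : i ≠ k) :
    w i k + maxPathWeight w k ≤ maxPathWeight w i := by
  have hne :
      {y : ℝ | ∃ l : List (Fin n), (k :: l).Nodup ∧ y = pathWeight w (k :: l)}.Nonempty :=
    ⟨0, [], List.nodup_singleton k, rfl⟩
  rw [add_comm, ← le_sub_iff_add_le]
  refine csSup_le hne ?_
  rintro _ ⟨l, hl, rfl⟩
  linarith [add_pathWeight_le_maxPathWeight hcyc hik hl]

end PathWeight

theorem condVal_sub_bundleVal_le_envyWeight {n m : ℕ} (v : Fin n → Fin m → ℝ)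
    (x : (Fin n → Finset (Fin m)) → ℝ) {i : Fin n} (k : Fin n) {S : Finset (Fin m)}
    (hS : 0 < prBundle x i S) :
    condVal v x i k S - bundleVal v i S ≤ envyWeight v x i k := by
  refine le_csSup ?_ ⟨S, hS, rfl⟩
  refine ((Set.toFinite {S : Finset (Fin m) | 0 < prBundle x i S}).image
    fun S => condVal v x i k S - bundleVal v i S).bddAbove.mono ?_
  rintro _ ⟨S, hS, rfl⟩
  exact ⟨S, hS, rfl⟩

theorem no_positive_cycle_implies_iEFable_general {n m : ℕ} (v : Fin n → Fin m → ℝ)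
    (x : (Fin n → Finset (Fin m)) → ℝ)
    (hcyc : ∀ (i : Fin n) (l : List (Fin n)), (i :: l).Nodup → l ≠ [] →
      pathWeight (envyWeight v x) (i :: l ++ [i]) ≤ 0) :
    IEFpay v x (fun i =>
      sSup {y : ℝ | ∃ l : List (Fin n), (i :: l).Nodup ∧
        y = pathWeight (envyWeight v x) (i :: l)}) := by
  intro i k hik S hS
  have henvy := condVal_sub_bundleVal_le_envyWeight v x k hS
  have hpot := add_maxPathWeight_le_maxPathWeight hcyc hik
  unfold maxPathWeight at hpot
  linarith

/-- if the interim envy graph of a lottery has no cycle of positive total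
weight, then the lottery is iEF-able with A-payments; indeed, setting `p i` to the
maximum total weight of a directed path starting at node `i` works. -/
theorem no_positive_cycle_implies_iEFable {n m : ℕ} (v : Fin n → Fin m → ℝ)
    (hv : ∀ i j, 0 ≤ v i j)
    (x : (Fin n → Finset (Fin m)) → ℝ)
    (hx0 : ∀ a, 0 ≤ x a) (hx1 : ∑ a, x a = 1)
    (hcyc : ∀ (i : Fin n) (l : List (Fin n)), (i :: l).Nodup → l ≠ [] →
      pathWeight (envyWeight v x) (i :: l ++ [i]) ≤ 0) :
    IEFpay v x (fun i =>
      sSup {y : ℝ | ∃ l : List (Fin n), (i :: l).Nodup ∧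
        y = pathWeight (envyWeight v x) (i :: l)}) :=
  no_positive_cycle_implies_iEFable_general v x hcyc
end

section
/- If for every selection of bundles S_i (each given to agent i with positive probability under lottery Q) and every permutation σ of the agents it holds that Σ_i v_i(S_i) ≥ Σ_i E_{A~Q}[v_i(A_{σ(i)}) | A_i = S_i], then the interim envy graph of Q has no cycle of positive total weight. -/
open Finset

-- pathWeight via zip
lemma pathWeight_zip {n : ℕ} (w : Fin n → Fin n → ℝ) :
    ∀ L : List (Fin n), pathWeight w L = ((L.zip L.tail).map (fun p => w p.1 p.2)).sum
  | [] => by simp [pathWeight]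
  | [a] => by simp [pathWeight]
  | a :: b :: t => by
      simp only [pathWeight, List.tail_cons, List.zip_cons_cons, List.map_cons, List.sum_cons]
      rw [pathWeight_zip w (b :: t)]
      simp

lemma condVal_self {n m : ℕ} (v : Fin n → Fin m → ℝ)
    (x : (Fin n → Finset (Fin m)) → ℝ) (i : Fin n) (S : Finset (Fin m))
    (h : 0 < prBundle x i S) : condVal v x i i S = bundleVal v i S := by
  unfold condVal
  rw [div_eq_iff h.ne']
  unfold prBundle
  rw [Finset.mul_sum]
  apply Finset.sum_congr rfl
  intro a ha
  rw [Finset.mem_filter] at ha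
  rw [ha.2, mul_comm]


lemma zip_snoc_left {α : Type*} : ∀ (A : List α) (z : α) (B : List α), B.length = A.length →
    (A ++ [z]).zip B = A.zip B
  | [], _, [], _ => by simp
  | [], _, (b :: B), h => by simp at h
  | (a :: A), z, [], h => by simp
  | (a :: A), z, (b :: B), h => by
      simp only [List.cons_append, List.zip_cons_cons]
      rw [zip_snoc_left A z B (by simpa using h)]

/-- if for every selection of positive-probability bundles `S i` and every
permutation σ of the agents `Σ_i v_i(S_i) ≥ Σ_i E[v_i(A_{σ(i)}) | A_i = S_i]`, then the
interim envy graph has no cycle of positive total weight. -/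
theorem sum_condition_implies_no_positive_cycle {n m : ℕ} (v : Fin n → Fin m → ℝ)
    (hv : ∀ i j, 0 ≤ v i j)
    (x : (Fin n → Finset (Fin m)) → ℝ)
    (hx0 : ∀ a, 0 ≤ x a) (hx1 : ∑ a, x a = 1)
    (hsum : ∀ (S : Fin n → Finset (Fin m)) (σ : Equiv.Perm (Fin n)),
      (∀ i, 0 < prBundle x i (S i)) →
      ∑ i, condVal v x i (σ i) (S i) ≤ ∑ i, bundleVal v i (S i)) :
    ∀ (i : Fin n) (l : List (Fin n)), (i :: l).Nodup → l ≠ [] →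
      pathWeight (envyWeight v x) (i :: l ++ [i]) ≤ 0 := by
  intro i l hnd hl
  classical
  set c : List (Fin n) := i :: l with hc
  set σ : Equiv.Perm (Fin n) := c.formPerm with hσ
  -- existence of a positive probability allocation
  have hax : ∃ a : Fin n → Finset (Fin m), 0 < x a := by
    by_contra h
    push_neg at h
    have : ∑ a, x a ≤ 0 := Finset.sum_nonpos (fun a _ => h a)
    linarith
  obtain ⟨a₀, ha₀⟩ := hax
  have hpos : ∀ y : Fin n, 0 < prBundle x y (a₀ y) := by
    intro y
    have : x a₀ ≤ prBundle x y (a₀ y) := by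
      apply Finset.single_le_sum (f := x) (fun a _ => hx0 a)
      simp
    linarith
  -- maximizer selection
  have hex : ∀ y : Fin n, ∃ T : Finset (Fin m), 0 < prBundle x y T ∧
      ∀ T', 0 < prBundle x y T' →
        condVal v x y (σ y) T' - bundleVal v y T' ≤
        condVal v x y (σ y) T - bundleVal v y T := by
    intro y
    have hne : (Finset.univ.filter (fun S : Finset (Fin m) => 0 < prBundle x y S)).Nonempty :=
      ⟨a₀ y, by simp [hpos y]⟩
    obtain ⟨T, hT, hTmax⟩ := Finset.exists_max_image _
      (fun S => condVal v x y (σ y) S - bundleVal v y S) hne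
    rw [Finset.mem_filter] at hT
    exact ⟨T, hT.2, fun T' hT' => hTmax T' (by simp [hT'])⟩
  choose S hSpos hSmax using hex
  -- envyWeight at edges of the cycle
  have hW : ∀ y : Fin n, envyWeight v x y (σ y) =
      condVal v x y (σ y) (S y) - bundleVal v y (S y) := by
    intro y
    apply IsGreatest.csSup_eq
    constructor
    · exact ⟨S y, hSpos y, rfl⟩
    · rintro z ⟨T, hT, rfl⟩
      exact hSmax y T hT
  -- main inequality from hsum
  have hmain := hsum S σ hSpos
  have hkey : ∑ y ∈ c.toFinset,
      (condVal v x y (σ y) (S y) - bundleVal v y (S y)) ≤ 0 := by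
    have hzero : ∀ y ∈ (Finset.univ : Finset (Fin n)), y ∉ c.toFinset →
        condVal v x y (σ y) (S y) - bundleVal v y (S y) = 0 := by
      intro y _ hy
      rw [List.mem_toFinset] at hy
      have : σ y = y := List.formPerm_apply_of_notMem hy
      rw [this, condVal_self v x y (S y) (hSpos y), sub_self]
    rw [Finset.sum_subset (Finset.subset_univ _) hzero]
    rw [Finset.sum_sub_distrib]
    linarith
  -- pathWeight equals sum over the cycle
  have hlen : 1 < c.length := by
    cases l with
    | nil => exact absurd rfl hl
    | cons b t => simp [hc]
  have htail : l ++ [i] = c.map σ := by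
    apply List.ext_getElem
    · simp [hc]
    · intro j h1 h2
      have hjc : j < c.length := by simpa [hc] using h2
      rw [List.getElem_map]
      rw [List.formPerm_apply_getElem c hnd j hjc]
      rcases Nat.lt_or_ge j l.length with hj | hj
      · rw [List.getElem_append_left hj]
        have hmod : (j + 1) % (l.length + 1) = j + 1 := Nat.mod_eq_of_lt (by omega)
        simp [hc, hmod]
      · have hjl : j = l.length := by
          have : j < l.length + 1 := by simpa using h1
          omega
        subst hjl
        rw [List.getElem_append_right (le_refl _)]
        have : (l.length + 1) % c.length = 0 := by
          simp [hc, Nat.mod_self]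
        simp [this, hc]
  have hpw : pathWeight (envyWeight v x) (c ++ [i]) =
      ∑ y ∈ c.toFinset, envyWeight v x y (σ y) := by
    rw [pathWeight_zip]
    have ht : (c ++ [i]).tail = l ++ [i] := by simp [hc]
    have hz : (c ++ [i]).zip ((c ++ [i]).tail) = c.zip (c.map σ) := by
      rw [ht, htail, zip_snoc_left c i (c.map σ) (by simp)]
    rw [hz]
    have hzm : ∀ d : List (Fin n), d.zip (d.map σ) = d.map (fun y => (y, σ y)) := by
      intro d; induction d with
      | nil => simp
      | cons a d ih => simp [ih]
    rw [hzm, List.map_map, List.sum_toFinset _ hnd]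
    rfl
  rw [hpw]
  calc ∑ y ∈ c.toFinset, envyWeight v x y (σ y)
      = ∑ y ∈ c.toFinset, (condVal v x y (σ y) (S y) - bundleVal v y (S y)) :=
        Finset.sum_congr rfl (fun y _ => hW y)
    _ ≤ 0 := hkey
end

section
/- For any allocation instance with two agents, every allocation in the support of an iEF lottery is envy-free: if Q is an iEF lottery for n = 2 agents and A is in the support of Q, then v_1(A_1) ≥ v_1(A_2) and v_2(A_2) ≥ v_2(A_1). -/
open Finset

lemma part_compl {m : ℕ} (v : Fin 2 → Fin m → ℝ) (i k : Fin 2) (hik : i ≠ k)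
    (a : Fin 2 → Finset (Fin m)) (ha : IsPartition a) :
    bundleVal v i (a k) = bundleVal v i Finset.univ - bundleVal v i (a i) := by
  have hdisj := ha.1 i k hik
  have hunion : a i ∪ a k = Finset.univ := by
    apply Finset.eq_univ_of_forall
    intro j
    obtain ⟨l, hl⟩ := ha.2 j
    have : l = i ∨ l = k := by fin_cases l <;> fin_cases i <;> fin_cases k <;> simp_all
    rcases this with h | h <;> subst h <;> simp [Finset.mem_union, hl]
  have := Finset.sum_union (f := fun j => v i j) hdisj
  rw [hunion] at this
  simp only [bundleVal]
  linarith

/-- for two agents, every allocation in the support of an iEF lottery is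
envy-free. -/
theorem iEF_two_agents_EF {m : ℕ} (v : Fin 2 → Fin m → ℝ)
    (hv : ∀ i j, 0 ≤ v i j)
    (x : (Fin 2 → Finset (Fin m)) → ℝ)
    (hx0 : ∀ a, 0 ≤ x a) (hx1 : ∑ a, x a = 1)
    (hsupp : ∀ a, 0 < x a → IsPartition a)
    (hief : IEF v x) :
    ∀ a, 0 < x a →
      bundleVal v 0 (a 1) ≤ bundleVal v 0 (a 0) ∧
      bundleVal v 1 (a 0) ≤ bundleVal v 1 (a 1) := by
  have key : ∀ (i k : Fin 2), i ≠ k → ∀ a, 0 < x a →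
      bundleVal v i (a k) ≤ bundleVal v i (a i) := by
    intro i k hik a ha
    set S := a i with hS
    have hmem : a ∈ Finset.univ.filter (fun b => b i = S) := by simp [hS]
    have hpr : 0 < prBundle x i S := by
      have := Finset.single_le_sum (f := x) (fun b _ => hx0 b) hmem
      exact lt_of_lt_of_le ha this
    have h1 := hief i k hik S hpr
    have h2 : (∑ b ∈ Finset.univ.filter (fun b => b i = S), x b * bundleVal v i (b k))
        = (bundleVal v i Finset.univ - bundleVal v i S) * prBundle x i S := by
      rw [prBundle, Finset.mul_sum]
      apply Finset.sum_congr rfl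
      intro b hb
      rcases lt_or_eq_of_le (hx0 b) with hbp | hbz
      · have hpart := hsupp b hbp
        have hbi : b i = S := by simpa using hb
        rw [part_compl v i k hik b hpart, hbi, mul_comm (x b)]
      · rw [← hbz]; ring
    rw [h2] at h1
    have h3 : bundleVal v i Finset.univ - bundleVal v i S ≤ bundleVal v i S :=
      le_of_mul_le_mul_right h1 hpr
    rw [part_compl v i k hik a (hsupp a ha), ← hS]
    linarith
  intro a ha
  exact ⟨key 0 1 (by decide) a ha, key 1 0 (by decide) a ha⟩
end
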